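/- arXiv:2001.06458 — 2 statements merged into one kernel-verified Lean document; each statement's English description precedes it below -/
import Mathlib

section
/- Let V be a unitary and P an orthogonal projection of finite rank p such that ‖[P,V]‖ ≤ ε < 1/(2p). Then the operator PVP + (1−P) is invertible, and |det(PVP + (1−P))| ≥ (1 − 2ε)^p > 0. Moreover ‖(PVP)(PV*P) − P‖ ≤ ε, i.e., PV*P is an approximate inverse of PVP on ran(P) with error at most ε in operator norm. -/
set_option maxHeartbeats 1000000

/-- Determinant of a symmetric endomorphism is the product of its eigenvalues. -/
lemma det_eq_prod_eigenvalues_aux {H : Type*} [NormedAddCommGroup H] [InnerProductSpace ℂ H]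
    [FiniteDimensional ℂ H] {n : ℕ} (hn : Module.finrank ℂ H = n)
    {T : H →ₗ[ℂ] H} (hT : T.IsSymmetric) :
    LinearMap.det T = ∏ i, (hT.eigenvalues hn i : ℂ) := by
  classical
  rw [← LinearMap.det_toMatrix (hT.eigenvectorBasis hn).toBasis]
  have h : LinearMap.toMatrix (hT.eigenvectorBasis hn).toBasis (hT.eigenvectorBasis hn).toBasis T
      = Matrix.diagonal (fun i => (hT.eigenvalues hn i : ℂ)) := by
    ext i j
    rw [LinearMap.toMatrix_apply]
    simp only [OrthonormalBasis.coe_toBasis, OrthonormalBasis.coe_toBasis_repr_apply]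
    rw [hT.apply_eigenvectorBasis hn j, map_smul, OrthonormalBasis.repr_self]
    by_cases hij : i = j <;> simp [hij, EuclideanSpace.single_apply, Matrix.diagonal_apply]
  rw [h, Matrix.det_diagonal]

/-- Ring identity for idempotents. -/
lemma ring_aux {R : Type*} [Ring R] (p v w : R) (hp : p * p = p) :
    (p * v * p + (1 - p)) * (p * w * p + (1 - p)) = 1 + (p * v * p * w * p - p) := by
  have h : (p * v * p + (1 - p)) * (p * w * p + (1 - p))
      = p * v * (p * p) * w * p + (p * v * p - p * v * (p * p))
        + (p * w * p - (p * p) * w * p) + (1 - p - p + p * p) := by noncomm_ring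
  rw [h, hp]
  noncomm_ring

/-- If `V` is unitary and `P` is a rank-`p` orthogonal projection with
`‖[P,V]‖ ≤ ε < 1/(2p)`, then `PVP + (1-P)` is invertible,
`|det(PVP + (1-P))| ≥ (1-2ε)^p > 0`, and `PV*P` is an approximate inverse
of `PVP` on the range of `P`: `‖(PVP)(PV*P) - P‖ ≤ ε`. -/
theorem detP_invertible_of_almost_commuting
    {H : Type*} [NormedAddCommGroup H] [InnerProductSpace ℂ H] [FiniteDimensional ℂ H]
    (V P : H →L[ℂ] H)
    (hV : V ∈ unitary (H →L[ℂ] H))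
    (hPsa : IsSelfAdjoint P) (hPproj : P * P = P)
    (p : ℕ) (hp : 1 ≤ p)
    (hrank : Module.finrank ℂ (LinearMap.range (P : H →ₗ[ℂ] H)) = p)
    (ε : ℝ) (hε : 0 < ε) (hεp : 2 * (p : ℝ) * ε < 1)
    (hcomm : ‖P * V - V * P‖ ≤ ε) :
    IsUnit (P * V * P + (1 - P))
    ∧ (1 - 2 * ε) ^ p ≤ ‖LinearMap.det ((P * V * P + (1 - P) : H →L[ℂ] H) : H →ₗ[ℂ] H)‖
    ∧ 0 < (1 - 2 * ε) ^ p
    ∧ ‖(P * V * P) * (P * (star V) * P) - P‖ ≤ ε := by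
  classical
  haveI : CompleteSpace H := FiniteDimensional.complete ℂ H
  have hVV : star V * V = 1 := (Unitary.mem_iff.mp hV).1
  have hVV' : V * star V = 1 := (Unitary.mem_iff.mp hV).2
  have hPstar : star P = P := hPsa.star_eq
  -- ε bounds
  have hεhalf : ε < 1 / 2 := by
    have : (1 : ℝ) ≤ (p : ℝ) := by exact_mod_cast hp
    nlinarith
  have h1ε : 0 < 1 - ε := by linarith
  have h12ε : 0 < 1 - 2 * ε := by linarith
  have hpos : 0 < (1 - 2 * ε) ^ p := pow_pos h12ε p
  -- norms of P and V
  have hnP : ‖P‖ ≤ 1 := by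
    have h := CStarRing.norm_star_mul_self (x := P)
    rw [hPstar, hPproj] at h
    nlinarith [norm_nonneg P]
  have hnV : ‖V‖ ≤ 1 := by
    have h := CStarRing.norm_star_mul_self (x := V)
    rw [hVV] at h
    have h1 : ‖(1 : H →L[ℂ] H)‖ ≤ 1 := by
      simpa [ContinuousLinearMap.one_def] using ContinuousLinearMap.norm_id_le (E := H)
    nlinarith [norm_nonneg V]
  -- a generic norm bound
  have hPV1 : ‖P * V‖ ≤ 1 := by
    refine le_trans (norm_mul_le _ _) ?_
    nlinarith [norm_nonneg P, norm_nonneg V]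
  have key : ∀ X : H →L[ℂ] H, ‖X‖ ≤ ε → ‖P * V * X * P‖ ≤ ε := by
    intro X hX
    calc ‖P * V * X * P‖ ≤ ‖P * V * X‖ * ‖P‖ := norm_mul_le _ _
      _ ≤ (‖P * V‖ * ‖X‖) * ‖P‖ :=
          mul_le_mul_of_nonneg_right (norm_mul_le _ _) (norm_nonneg _)
      _ ≤ (1 * ε) * 1 := by
          apply mul_le_mul _ hnP (norm_nonneg _) (by positivity)
          exact mul_le_mul hPV1 hX (norm_nonneg _) zero_le_one
      _ = ε := by ring
  -- commutator variants
  have hcomm' : ‖P * star V - star V * P‖ ≤ ε := by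
    have h : P * star V - star V * P = -star (P * V - V * P) := by
      simp [star_sub, star_mul, hPstar]
    rw [h, norm_neg, norm_star]
    exact hcomm
  -- part 4 : the approximate inverse bound
  set E : H →L[ℂ] H := P * V * P * star V * P - P with hEdef
  have hE : ‖E‖ ≤ ε := by
    have hexp : P * V * (P * star V - star V * P) * P = E := by
      rw [hEdef]
      have h : P * V * (P * star V - star V * P) * P
          = P * V * P * star V * P - P * (V * star V) * (P * P) := by noncomm_ring
      rw [h, hVV', mul_one]
      simp only [hPproj]
    rw [← hexp]
    exact key _ hcomm'
  have hgoal4 : ‖(P * V * P) * (P * (star V) * P) - P‖ ≤ ε := by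
    have h : (P * V * P) * (P * (star V) * P) = P * V * (P * P) * star V * P := by noncomm_ring
    rw [h, hPproj]
    exact hE
  -- the other side
  set E' : H →L[ℂ] H := P * star V * P * V * P - P with hE'def
  have hE' : ‖E'‖ ≤ ε := by
    have hexp : P * star V * (P * V - V * P) * P = E' := by
      rw [hE'def]
      have h : P * star V * (P * V - V * P) * P
          = P * star V * P * V * P - P * (star V * V) * (P * P) := by noncomm_ring
      rw [h, hVV, mul_one]
      simp only [hPproj]
    rw [← hexp]
    have h4 : ‖star V‖ ≤ 1 := by rw [norm_star]; exact hnV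
    have hPV1' : ‖P * star V‖ ≤ 1 := by
      refine le_trans (norm_mul_le _ _) ?_
      nlinarith [norm_nonneg P, norm_nonneg (star V)]
    calc ‖P * star V * (P * V - V * P) * P‖
        ≤ ‖P * star V * (P * V - V * P)‖ * ‖P‖ := norm_mul_le _ _
      _ ≤ (‖P * star V‖ * ‖P * V - V * P‖) * ‖P‖ :=
          mul_le_mul_of_nonneg_right (norm_mul_le _ _) (norm_nonneg _)
      _ ≤ (1 * ε) * 1 := by
          apply mul_le_mul _ hnP (norm_nonneg _) (by positivity)
          exact mul_le_mul hPV1' hcomm (norm_nonneg _) zero_le_one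
      _ = ε := by ring
  -- A and B
  set A : H →L[ℂ] H := P * V * P + (1 - P) with hAdef
  set B : H →L[ℂ] H := P * star V * P + (1 - P) with hBdef
  have hAB : A * B = 1 + E := ring_aux P V (star V) hPproj
  have hBA : B * A = 1 + E' := ring_aux P (star V) V hPproj
  have hε1 : ε < 1 := by linarith
  -- units
  have hUAB : IsUnit (A * B) := by
    rw [hAB]
    rw [← sub_neg_eq_add]
    exact isUnit_one_sub_of_norm_lt_one (by rw [norm_neg]; exact lt_of_le_of_lt hE hε1)
  have hUBA : IsUnit (B * A) := by
    rw [hBA]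
    rw [← sub_neg_eq_add]
    exact isUnit_one_sub_of_norm_lt_one (by rw [norm_neg]; exact lt_of_le_of_lt hE' hε1)
  have hUA : IsUnit A := by
    obtain ⟨w, hw1, hw2⟩ := isUnit_iff_exists.mp hUAB
    obtain ⟨w', hw1', hw2'⟩ := isUnit_iff_exists.mp hUBA
    have hr : A * (B * w) = 1 := by rw [← mul_assoc]; exact hw1
    have hl : (w' * B) * A = 1 := by rw [mul_assoc]; exact hw2'
    have heq : (w' * B : H →L[ℂ] H) = B * w := by
      calc (w' * B : H →L[ℂ] H) = (w' * B) * (A * (B * w)) := by rw [hr, mul_one]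
        _ = ((w' * B) * A) * (B * w) := by simp only [mul_assoc]
        _ = B * w := by rw [hl, one_mul]
    have hl' : (B * w) * A = 1 := by rw [← heq]; exact hl
    exact isUnit_iff_exists.mpr ⟨B * w, hr, hl'⟩
  -- B = star A, so A * B is selfadjoint
  have hBstarA : star A = B := by
    rw [hAdef, hBdef]
    simp [star_sub, star_mul, hPstar, mul_assoc]
  have hSsa : IsSelfAdjoint (A * B) := by
    rw [← hBstarA]
    exact IsSelfAdjoint.mul_star_self A
  -- spectral analysis of S = A * B = 1 + E
  set S : H →L[ℂ] H := A * B with hSdef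
  have hSsym : (S : H →ₗ[ℂ] H).IsSymmetric := hSsa.isSymmetric
  set n := Module.finrank ℂ H with hndef
  have hn : Module.finrank ℂ H = n := rfl
  set μ : Fin n → ℝ := hSsym.eigenvalues hn with hμdef
  set b : OrthonormalBasis (Fin n) ℂ H := hSsym.eigenvectorBasis hn with hbdef
  have hb : ∀ i, S (b i) = (μ i : ℂ) • b i := fun i => hSsym.apply_eigenvectorBasis hn i
  have hbnorm : ∀ i, ‖b i‖ = 1 := fun i => b.orthonormal.1 i
  -- each eigenvalue is within ε of 1
  have hμclose : ∀ i, |μ i - 1| ≤ ε := by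
    intro i
    have hEb : E (b i) = ((μ i : ℂ) - 1) • b i := by
      have h : E = S - 1 := by rw [hAB]; abel
      rw [h]
      simp [hb i, sub_smul]
    have h1 : ‖E (b i)‖ = |μ i - 1| := by
      rw [hEb, norm_smul, hbnorm, mul_one]
      have : ((μ i : ℂ) - 1) = ((μ i - 1 : ℝ) : ℂ) := by push_cast; ring
      rw [this, Complex.norm_real, Real.norm_eq_abs]
    have h2 : ‖E (b i)‖ ≤ ‖E‖ * ‖b i‖ := E.le_opNorm _
    rw [h1, hbnorm, mul_one] at h2
    exact le_trans h2 hE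
  have hμlb : ∀ i, 1 - ε ≤ μ i := by
    intro i
    have := abs_le.mp (hμclose i)
    linarith [this.1]
  -- eigenvectors with eigenvalue ≠ 1 lie in range P
  have hrangeE : LinearMap.range (E : H →ₗ[ℂ] H) ≤ LinearMap.range (P : H →ₗ[ℂ] H) := by
    have hfact : E = P * (V * P * star V * P - 1) := by
      rw [hEdef]; noncomm_ring
    have hcoe : (E : H →ₗ[ℂ] H)
        = (P : H →ₗ[ℂ] H) ∘ₗ ((V * P * star V * P - 1 : H →L[ℂ] H) : H →ₗ[ℂ] H) := by
      rw [hfact]; rfl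
    rw [hcoe]
    exact LinearMap.range_comp_le_range _ _
  have hmem : ∀ i, μ i ≠ 1 → b i ∈ LinearMap.range (P : H →ₗ[ℂ] H) := by
    intro i hi
    apply hrangeE
    refine ⟨((μ i : ℂ) - 1)⁻¹ • b i, ?_⟩
    have hEb : E (b i) = ((μ i : ℂ) - 1) • b i := by
      have h : E = S - 1 := by rw [hAB]; abel
      rw [h]; simp [hb i, sub_smul]
    have hne : ((μ i : ℂ) - 1) ≠ 0 := by
      intro h
      apply hi
      have : (μ i : ℂ) = 1 := by linear_combination h
      exact_mod_cast this
    show E (((μ i : ℂ) - 1)⁻¹ • b i) = b i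
    rw [map_smul, hEb, smul_smul, inv_mul_cancel₀ hne, one_smul]
  -- counting: at most p eigenvalues differ from 1
  set s : Finset (Fin n) := Finset.univ.filter (fun i => μ i ≠ 1) with hsdef
  have hcard : s.card ≤ p := by
    rw [← hrank]
    rw [← Fintype.card_coe]
    set W := LinearMap.range (P : H →ₗ[ℂ] H)
    have hv : ∀ i : s, b i ∈ W := by
      rintro ⟨i, hi⟩
      exact hmem i (by simpa [hsdef] using hi)
    set v : s → W := fun i => ⟨b i, hv i⟩ with hvdef
    have hindep : LinearIndependent ℂ v := by
      have h1 : LinearIndependent ℂ (fun i : s => b i) := by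
        have := b.toBasis.linearIndependent
        have h2 := this.comp (fun i : s => (i : Fin n)) Subtype.coe_injective
        exact h2
      exact h1.of_comp W.subtype
    exact hindep.fintype_card_le_finrank
  -- determinant of S as product of eigenvalues
  have hdetS : LinearMap.det (S : H →ₗ[ℂ] H) = ((∏ i, μ i : ℝ) : ℂ) := by
    rw [det_eq_prod_eigenvalues_aux hn hSsym]
    push_cast
    rfl
  -- product bound
  have hprod : (1 - ε) ^ p ≤ ∏ i, μ i := by
    have hsplit : ∏ i, μ i = (∏ i ∈ s, μ i) * ∏ i ∈ sᶜ, μ i := (Finset.prod_mul_prod_compl s μ).symm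
    have hone : ∏ i ∈ sᶜ, μ i = 1 := by
      apply Finset.prod_eq_one
      intro i hi
      have : ¬ (μ i ≠ 1) := by simpa [hsdef] using hi
      simpa using this
    have hlow : (1 - ε) ^ s.card ≤ ∏ i ∈ s, μ i := by
      rw [← Finset.prod_const]
      exact Finset.prod_le_prod (fun i _ => le_of_lt h1ε) (fun i _ => hμlb i)
    have hmono : (1 - ε) ^ p ≤ (1 - ε) ^ s.card :=
      pow_le_pow_of_le_one (le_of_lt h1ε) (by linarith) hcard
    rw [hsplit, hone, mul_one]
    exact le_trans hmono hlow
  -- |det A|^2 = det S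
  have hdetmul : LinearMap.det (S : H →ₗ[ℂ] H)
      = LinearMap.det (A : H →ₗ[ℂ] H) * LinearMap.det (B : H →ₗ[ℂ] H) := by
    rw [hSdef]
    have : ((A * B : H →L[ℂ] H) : H →ₗ[ℂ] H) = (A : H →ₗ[ℂ] H) ∘ₗ (B : H →ₗ[ℂ] H) := rfl
    rw [this, LinearMap.det_comp]
  have hdetB : LinearMap.det (B : H →ₗ[ℂ] H)
      = starRingEnd ℂ (LinearMap.det (A : H →ₗ[ℂ] H)) := by
    have hadj : (B : H →ₗ[ℂ] H) = LinearMap.adjoint (A : H →ₗ[ℂ] H) := by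
      rw [← hBstarA]
      rfl
    rw [hadj]
    set ob := stdOrthonormalBasis ℂ H
    rw [← LinearMap.det_toMatrix ob.toBasis, ← LinearMap.det_toMatrix ob.toBasis,
      LinearMap.toMatrix_adjoint, Matrix.det_conjTranspose]
    rfl
  have hns : LinearMap.det (S : H →ₗ[ℂ] H)
      = (Complex.normSq (LinearMap.det (A : H →ₗ[ℂ] H)) : ℂ) := by
    rw [hdetmul, hdetB, Complex.mul_conj]
  have hreal : Complex.normSq (LinearMap.det (A : H →ₗ[ℂ] H)) = ∏ i, μ i := by
    have h := (hdetS.symm.trans hns).symm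
    exact_mod_cast h
  -- conclude the determinant bound
  have habs : (1 - 2 * ε) ^ p ≤ ‖LinearMap.det (A : H →ₗ[ℂ] H)‖ := by
    set d := ‖LinearMap.det (A : H →ₗ[ℂ] H)‖ with hddef
    have hd0 : 0 ≤ d := norm_nonneg _
    have hsq : d ^ 2 = ∏ i, μ i := by
      rw [hddef, Complex.sq_norm, hreal]
    have hsq2 : ((1 - 2 * ε) ^ p) ^ 2 ≤ d ^ 2 := by
      rw [hsq]
      calc ((1 - 2 * ε) ^ p) ^ 2 = ((1 - 2 * ε) ^ 2) ^ p := by rw [← pow_mul, ← pow_mul, Nat.mul_comm]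
        _ ≤ (1 - ε) ^ p := by
            apply pow_le_pow_left₀ (by positivity)
            nlinarith
        _ ≤ ∏ i, μ i := hprod
    nlinarith [hpos]
  exact ⟨hUA, habs, hpos, hgoal4⟩
end

section
/- Let (ρ_L) be a sequence of real numbers converging to ρ with L·(ρ − ρ_L) → 0, and let p, n be positive integers. Suppose there is a sequence of positive integers (L₂(L)) with L₂(L) ≥ cL for some c > 0 whose values range over all sufficiently large positive integers, and such that dist(p·L₂(L)·ρ_L, ℤ) → 0 as L → ∞. Then p·ρ ∈ ℤ. -/
/-- Distance from a real number to the nearest integer. -/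
noncomputable def distToInt (x : ℝ) : ℝ := |x - round x|

lemma distToInt_le (x : ℝ) (k : ℤ) : distToInt x ≤ |x - (k : ℝ)| := by
  unfold distToInt
  by_contra h
  push_neg at h
  have h1 : |x - round x| ≤ 1 / 2 := abs_sub_round x
  have h2 : |x - (k : ℝ)| < 1 / 2 := lt_of_lt_of_le h h1
  have h3 : |((round x : ℤ) : ℝ) - (k : ℝ)| < 1 := by
    have := abs_sub (x - (k:ℝ)) (x - (round x : ℝ))
    have h4 : ((round x : ℤ) : ℝ) - (k:ℝ) = (x - (k:ℝ)) - (x - (round x : ℝ)) := by ring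
    rw [h4]
    calc |(x - (k:ℝ)) - (x - (round x : ℝ))| ≤ |x - (k:ℝ)| + |x - (round x : ℝ)| :=
          abs_sub _ _
      _ < 1 := by linarith
  have h5 : round x = k := by
    have : |((round x : ℤ) : ℝ) - (k : ℝ)| = |((round x - k : ℤ) : ℝ)| := by push_cast; ring_nf
    rw [this] at h3
    rw [← Int.cast_abs] at h3
    have h7 : |round x - k| < (1 : ℤ) := by exact_mod_cast h3
    rcases abs_lt.mp h7 with ⟨h8, h9⟩
    omega
  rw [h5] at h
  exact absurd h (lt_irrefl _)

lemma distToInt_nonneg (x : ℝ) : 0 ≤ distToInt x := abs_nonneg _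

lemma distToInt_neg (x : ℝ) : distToInt (-x) ≤ distToInt x := by
  have := distToInt_le (-x) (-round x)
  unfold distToInt
  calc |(-x) - round (-x)| ≤ |(-x) - ((-round x : ℤ) : ℝ)| := distToInt_le (-x) _
    _ = |x - round x| := by push_cast; rw [← abs_neg]; ring_nf

lemma distToInt_add (a b : ℝ) : distToInt (a + b) ≤ distToInt a + distToInt b := by
  calc distToInt (a + b) ≤ |(a + b) - ((round a + round b : ℤ) : ℝ)| :=
        distToInt_le _ _
    _ = |(a - round a) + (b - round b)| := by push_cast; ring_nf
    _ ≤ |a - round a| + |b - round b| := abs_add_le _ _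
    _ = distToInt a + distToInt b := rfl

/-- distance to nearest integer triangle inequality against an approximation -/
lemma distToInt_le_add_abs (a b : ℝ) : distToInt a ≤ distToInt b + |a - b| := by
  calc distToInt a ≤ |a - ((round b : ℤ) : ℝ)| := distToInt_le _ _
    _ = |(b - round b) + (a - b)| := by ring_nf
    _ ≤ |b - round b| + |a - b| := abs_add_le _ _

/-- Fractional Lieb–Schultz–Mattis conclusion: if `ρ_L → ρ` with
`L(ρ - ρ_L) → 0`, and along a sequence of widths `L₂(L) ≥ cL` whose values
range over all sufficiently large integers the quantity `p L₂(L) ρ_L` is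
asymptotically integer-valued, then `pρ ∈ ℤ`. -/
theorem fractional_LSM_density_integrality
    (ρ : ℝ) (ρL : ℕ → ℝ)
    (hρ : Filter.Tendsto (fun L : ℕ => (L : ℝ) * (ρ - ρL L)) Filter.atTop (nhds 0))
    (p n : ℕ) (hp : 0 < p) (hn : 0 < n)
    (c : ℝ) (hc : 0 < c)
    (L₂ : ℕ → ℕ)
    (hL₂ : ∀ L : ℕ, c * (L : ℝ) ≤ (L₂ L : ℝ))
    (hrange : ∃ N : ℕ, ∀ m : ℕ, N ≤ m → ∃ L : ℕ, L₂ L = m)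
    (hint : Filter.Tendsto (fun L : ℕ => distToInt ((p : ℝ) * (L₂ L : ℝ) * ρL L))
      Filter.atTop (nhds 0)) :
    ∃ k : ℤ, (p : ℝ) * ρ = (k : ℝ) := by
  classical
  by_contra hcon
  set x : ℝ := (p : ℝ) * ρ with hx
  set δ : ℝ := distToInt x with hδdef
  have hδ : 0 < δ := by
    rcases lt_or_eq_of_le (distToInt_nonneg x) with h | h
    · exact h
    · exfalso
      apply hcon
      refine ⟨round x, ?_⟩
      have : |x - round x| = 0 := h.symm
      have := abs_eq_zero.mp this
      linarith [this]
  obtain ⟨N, hN⟩ := hrange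
  -- key pair inequality
  have key1 : ∀ m : ℕ, δ ≤ distToInt ((m : ℝ) * x) + distToInt (((m : ℝ) + 1) * x) := by
    intro m
    have hxeq : x = ((m : ℝ) + 1) * x + (-((m : ℝ) * x)) := by ring
    calc δ = distToInt x := rfl
      _ = distToInt (((m : ℝ) + 1) * x + (-((m : ℝ) * x))) := by rw [← hxeq]
      _ ≤ distToInt (((m : ℝ) + 1) * x) + distToInt (-((m : ℝ) * x)) := distToInt_add _ _
      _ ≤ distToInt (((m : ℝ) + 1) * x) + distToInt ((m : ℝ) * x) := by
          linarith [distToInt_neg ((m : ℝ) * x)]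
      _ = distToInt ((m : ℝ) * x) + distToInt (((m : ℝ) + 1) * x) := by ring
  -- epsilon and K
  set ε : ℝ := δ / (4 * (4 * (p : ℝ) + 1)) with hεdef
  have hppos : (0 : ℝ) < (p : ℝ) := by exact_mod_cast hp
  have hε : 0 < ε := by positivity
  have h1 : ∀ᶠ L : ℕ in Filter.atTop, distToInt ((p : ℝ) * (L₂ L : ℝ) * ρL L) < ε :=
    hint.eventually_lt_const hε
  have h2 : ∀ᶠ L : ℕ in Filter.atTop, |(L : ℝ) * (ρ - ρL L)| < ε := by
    have habs : Filter.Tendsto (fun L : ℕ => |(L : ℝ) * (ρ - ρL L)|) Filter.atTop (nhds 0) := by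
      simpa using hρ.abs
    exact habs.eventually_lt_const hε
  obtain ⟨K, hK⟩ := Filter.eventually_atTop.mp (h1.and h2)
  -- counting setup
  set t : ℕ := K + N + 5 with htdef
  set M : ℕ := N + 2 * t with hMdef
  set S : Finset ℕ :=
    (Finset.Icc N M).filter (fun m => δ / 2 ≤ distToInt ((m : ℝ) * x)) with hSdef
  -- lower bound on S.card
  have hScard : t ≤ S.card := by
    set f : ℕ → ℕ := fun j =>
      if δ / 2 ≤ distToInt (((N + 2 * j : ℕ) : ℝ) * x) then N + 2 * j else N + 2 * j + 1
      with hfdef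
    have hfor : ∀ j, f j = N + 2 * j ∨ f j = N + 2 * j + 1 := by
      intro j; rw [hfdef]; dsimp only; split <;> simp
    have hmaps : ∀ j ∈ Finset.range t, f j ∈ S := by
      intro j hj
      have hjt : j < t := Finset.mem_range.mp hj
      rw [hSdef]
      rw [Finset.mem_filter]
      rw [hfdef]; dsimp only
      split_ifs with h
      · constructor
        · rw [Finset.mem_Icc]; omega
        · exact h
      · push_neg at h
        constructor
        · rw [Finset.mem_Icc]; omega
        · have := key1 (N + 2 * j)
          have hcast : (((N + 2 * j : ℕ) : ℝ) + 1) = ((N + 2 * j + 1 : ℕ) : ℝ) := by push_cast; ring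
          rw [hcast] at this
          linarith
    have hinj : Set.InjOn f (Finset.range t) := by
      intro a _ b _ hab
      rcases hfor a with h1 | h1 <;> rcases hfor b with h2 | h2 <;> omega
    calc t = (Finset.range t).card := (Finset.card_range t).symm
      _ ≤ S.card := Finset.card_le_card_of_injOn f hmaps hinj
  -- choice of preimages under L₂
  set ℓ : ℕ → ℕ := fun m => if h : ∃ L, L₂ L = m then h.choose else 0 with hℓdef
  have hℓspec : ∀ m ∈ S, L₂ (ℓ m) = m := by
    intro m hm
    have hmIcc : m ∈ Finset.Icc N M := (Finset.mem_filter.mp (by rwa [hSdef] at hm)).1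
    have hmN : N ≤ m := (Finset.mem_Icc.mp hmIcc).1
    have hex : ∃ L, L₂ L = m := hN m hmN
    rw [hℓdef]; dsimp only; rw [dif_pos hex]; exact hex.choose_spec
  have hinjℓ : Set.InjOn ℓ S := by
    intro a ha b hb hab
    rw [← hℓspec a ha, ← hℓspec b hb, hab]
  -- the image has an element ≥ t - 1
  have hTcard : t ≤ (S.image ℓ).card := by
    rw [Finset.card_image_of_injOn hinjℓ]; exact hScard
  have hbig : ∃ L ∈ S.image ℓ, t - 1 ≤ L := by
    by_contra hall
    push_neg at hall
    have hsub : S.image ℓ ⊆ Finset.range (t - 1) := by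
      intro L hL
      exact Finset.mem_range.mpr (hall L hL)
    have := Finset.card_le_card hsub
    rw [Finset.card_range] at this
    omega
  obtain ⟨L, hLmem, hLt⟩ := hbig
  obtain ⟨m, hmS, hℓm⟩ := Finset.mem_image.mp hLmem
  have hL₂m : L₂ L = m := by rw [← hℓm]; exact hℓspec m hmS
  -- facts about m
  have hmfilter := Finset.mem_filter.mp (by rwa [hSdef] at hmS)
  have hmIcc := Finset.mem_Icc.mp hmfilter.1
  have hmdist : δ / 2 ≤ distToInt ((m : ℝ) * x) := hmfilter.2
  -- bounds
  have hLK : K ≤ L := by omega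
  have hm4L : m ≤ 4 * L := by omega
  have hLpos : 0 < L := by omega
  obtain ⟨hd1, hd2⟩ := hK L hLK
  rw [hL₂m] at hd1
  -- main estimate
  have hest : distToInt ((m : ℝ) * x) ≤
      distToInt ((p : ℝ) * (m : ℝ) * ρL L) + |(p : ℝ) * (m : ℝ) * (ρ - ρL L)| := by
    have := distToInt_le_add_abs ((m : ℝ) * x) ((p : ℝ) * (m : ℝ) * ρL L)
    have heq : (m : ℝ) * x - (p : ℝ) * (m : ℝ) * ρL L = (p : ℝ) * (m : ℝ) * (ρ - ρL L) := by
      rw [hx]; ring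
    rwa [heq] at this
  have habs : |(p : ℝ) * (m : ℝ) * (ρ - ρL L)| ≤ 4 * (p : ℝ) * ε := by
    have hLR : (0 : ℝ) < (L : ℝ) := by exact_mod_cast hLpos
    have hmR : (m : ℝ) ≤ 4 * (L : ℝ) := by exact_mod_cast hm4L
    have hkey : (L : ℝ) * |(p : ℝ) * (m : ℝ) * (ρ - ρL L)| =
        (p : ℝ) * (m : ℝ) * |(L : ℝ) * (ρ - ρL L)| := by
      calc (L : ℝ) * |(p : ℝ) * (m : ℝ) * (ρ - ρL L)|
          = |(L : ℝ)| * |(p : ℝ) * (m : ℝ) * (ρ - ρL L)| := by rw [abs_of_nonneg hLR.le]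
        _ = |(L : ℝ) * ((p : ℝ) * (m : ℝ) * (ρ - ρL L))| := (abs_mul _ _).symm
        _ = |((p : ℝ) * (m : ℝ)) * ((L : ℝ) * (ρ - ρL L))| := by ring_nf
        _ = |(p : ℝ) * (m : ℝ)| * |(L : ℝ) * (ρ - ρL L)| := abs_mul _ _
        _ = (p : ℝ) * (m : ℝ) * |(L : ℝ) * (ρ - ρL L)| := by
            rw [abs_of_nonneg (by positivity : (0:ℝ) ≤ (p : ℝ) * (m : ℝ))]
    have h3 : (L : ℝ) * |(p : ℝ) * (m : ℝ) * (ρ - ρL L)| ≤ (p : ℝ) * (m : ℝ) * ε := by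
      rw [hkey]
      exact mul_le_mul_of_nonneg_left hd2.le (by positivity)
    have h4 : (p : ℝ) * (m : ℝ) * ε ≤ (L : ℝ) * (4 * (p : ℝ) * ε) := by
      have hq := mul_le_mul_of_nonneg_right hmR (by positivity : (0:ℝ) ≤ (p : ℝ) * ε)
      nlinarith [hq]
    have h5 : (L : ℝ) * |(p : ℝ) * (m : ℝ) * (ρ - ρL L)| ≤ (L : ℝ) * (4 * (p : ℝ) * ε) :=
      le_trans h3 h4
    exact le_of_mul_le_mul_left (by linarith) hLR
  have hfinal : distToInt ((m : ℝ) * x) < ε + 4 * (p : ℝ) * ε := by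
    have : distToInt ((p : ℝ) * (m : ℝ) * ρL L) < ε := hd1
    linarith
  have : δ / 2 < ε * (4 * (p : ℝ) + 1) := by
    calc δ / 2 ≤ distToInt ((m : ℝ) * x) := hmdist
      _ < ε + 4 * (p : ℝ) * ε := hfinal
      _ = ε * (4 * (p : ℝ) + 1) := by ring
  rw [hεdef] at this
  have h6 : δ / (4 * (4 * (p : ℝ) + 1)) * (4 * (p : ℝ) + 1) = δ / 4 := by
    field_simp
  rw [h6] at this
  linarith
end
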